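/- Let A : ℝ^d → ℝ^m be an affine map, let c : ℝ^d → ℝ be an affine function, and let α ≥ 0. Then the set { x ∈ ℝ^d : c(x) > 0 and ‖A(x)‖ ≤ α · c(x) } is convex, where ‖·‖ is the Euclidean norm on ℝ^m. Consequently, the function x ↦ ‖A(x)‖ / c(x) is quasiconvex on the convex open half-space { x : c(x) > 0 }: each of its sublevel sets within that region is convex. (This covers both the multiple-view reprojection error and the homography transfer error.) -/

import Mathlib

/-!
The set `{(v, t) | 0 < t ∧ ‖v‖ ≤ α * t}` is convex: it is a half-space intersected with a
sublevel set of the convex function `‖v‖ - α * t`. The set of the theorem is its preimage under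
the affine map `x ↦ (A x, c x)`, and on `0 < c x` the inequality `‖A x‖ / c x ≤ α` is the same as
`‖A x‖ ≤ α * c x`.
-/

theorem convex_setOf_norm_fst_le_mul_snd {F : Type*} [SeminormedAddCommGroup F]
    [NormedSpace ℝ F] (α : ℝ) : Convex ℝ {p : F × ℝ | ‖p.1‖ ≤ α * p.2} := by
  simpa [sub_nonpos] using
    (((convexOn_norm convex_univ).comp_linearMap (LinearMap.fst ℝ F ℝ)).sub
      ((α • LinearMap.snd ℝ F ℝ).concaveOn convex_univ)).convex_le 0

theorem convex_setOf_pos_and_norm_le_mul {E F : Type*} [AddCommGroup E] [Module ℝ E]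
    [SeminormedAddCommGroup F] [NormedSpace ℝ F] (A : E →ᵃ[ℝ] F) (c : E →ᵃ[ℝ] ℝ) (α : ℝ) :
    Convex ℝ {x | 0 < c x ∧ ‖A x‖ ≤ α * c x} :=
  ((convex_halfSpace_gt (LinearMap.snd ℝ F ℝ).isLinear 0).inter
    (convex_setOf_norm_fst_le_mul_snd α)).affine_preimage (A.prod c)

theorem setOf_pos_and_div_le_eq {E : Type*} (f g : E → ℝ) (α : ℝ) :
    {x | 0 < g x ∧ f x / g x ≤ α} = {x | 0 < g x ∧ f x ≤ α * g x} :=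
  Set.ext fun _ => and_congr_right fun hg => div_le_iff₀ hg

theorem affine_over_affine_quasiconvex_general
    (d m : ℕ)
    (A : (Fin d → ℝ) →ᵃ[ℝ] EuclideanSpace ℝ (Fin m))
    (c : (Fin d → ℝ) →ᵃ[ℝ] ℝ)
    (α : ℝ) :
    Convex ℝ {x : Fin d → ℝ | 0 < c x ∧ ‖A x‖ ≤ α * c x} ∧
    Convex ℝ {x : Fin d → ℝ | 0 < c x ∧ ‖A x‖ / c x ≤ α} := by
  have hconvex := convex_setOf_pos_and_norm_le_mul A c α
  refine ⟨hconvex, ?_⟩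
  rw [setOf_pos_and_div_le_eq (fun x => ‖A x‖) c α]
  exact hconvex

/-- For an affine map `A : ℝ^d → ℝ^m`, an affine function `c : ℝ^d → ℝ` and
`α ≥ 0`, the set `{x | c(x) > 0 ∧ ‖A(x)‖ ≤ α · c(x)}` is convex; consequently
`x ↦ ‖A(x)‖ / c(x)` is quasiconvex on `{x | c(x) > 0}`: its `α`-sublevel set
within that region is convex. -/
theorem affine_over_affine_quasiconvex
    (d m : ℕ)
    (A : (Fin d → ℝ) →ᵃ[ℝ] EuclideanSpace ℝ (Fin m))
    (c : (Fin d → ℝ) →ᵃ[ℝ] ℝ)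
    (α : ℝ) (hα : 0 ≤ α) :
    Convex ℝ {x : Fin d → ℝ | 0 < c x ∧ ‖A x‖ ≤ α * c x} ∧
    Convex ℝ {x : Fin d → ℝ | 0 < c x ∧ ‖A x‖ / c x ≤ α} :=
  affine_over_affine_quasiconvex_general d m A c α
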